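/- Let C ⊆ ℤ^p be a cone generated (over ℚ^+) by vectors γ^{(i)}, and let A : ℤ^p → ℚ be a linear map with A(γ^{(i)}) ∈ {1, 0, −1} for all i. Define C^≥ = {v ∈ C : A(v) ≥ 0}. Then C^≥ is generated over ℚ^+ by the set consisting of those γ^{(i)} with A(γ^{(i)}) ≥ 0 together with all sums γ^{(i)} + γ^{(j)} where A(γ^{(i)}) = −1 and A(γ^{(j)}) = 1. -/
import Mathlib


/-- The canonical map `ℤ^p → ℚ^p`. -/
def intVecToQ (p : ℕ) (v : Fin p → ℤ) : Fin p → ℚ := fun a => (v a : ℚ)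

lemma sum_pair_smul {M : Type*} [AddCommMonoid M] [Module ℚ M] (n : ℕ)
    (g : Fin n → M) (c : Fin n → ℚ) (d : Fin n → Fin n → ℚ) :
    (∑ i, c i • g i) + ∑ i, ∑ j, d i j • (g i + g j)
      = ∑ k, (c k + (∑ j, d k j) + (∑ i, d i k)) • g k := by
  have h1 : ∑ i, ∑ j, d i j • (g i + g j)
      = (∑ i, (∑ j, d i j) • g i) + ∑ k, (∑ i, d i k) • g k := by
    simp only [smul_add, Finset.sum_add_distrib, Finset.sum_smul]
    congr 1
    rw [Finset.sum_comm]
  rw [h1, ← add_assoc, ← Finset.sum_add_distrib, ← Finset.sum_add_distrib]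
  refine Finset.sum_congr rfl fun k _ => ?_
  rw [add_smul, add_smul]

/-- Lemma on cones: Let `C ⊆ ℤ^p` be the cone generated over `ℚ⁺`
by vectors `γ⁽¹⁾,…,γ⁽ⁿ⁾`, and let `A` be a linear functional with
`A(γ⁽ⁱ⁾) ∈ {1,0,−1}` for all `i`.  Then
`C^≥ = {v ∈ C : A(v) ≥ 0}` is generated over `ℚ⁺` by the `γ⁽ⁱ⁾` with
`A(γ⁽ⁱ⁾) ≥ 0` together with the sums `γ⁽ⁱ⁾ + γ⁽ʲ⁾` where `A(γ⁽ⁱ⁾) = −1` and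
`A(γ⁽ʲ⁾) = 1`. -/
theorem cone_halfspace_generators
    (p n : ℕ) (γ : Fin n → (Fin p → ℤ))
    (A : (Fin p → ℚ) →ₗ[ℚ] ℚ)
    (hA : ∀ i, A (intVecToQ p (γ i)) ∈ ({1, 0, -1} : Set ℚ)) :
    ∀ v : Fin p → ℤ,
      ((∃ c : Fin n → ℚ, (∀ i, 0 ≤ c i) ∧
          intVecToQ p v = ∑ i, c i • intVecToQ p (γ i)) ∧ 0 ≤ A (intVecToQ p v))
      ↔
      (∃ (c : Fin n → ℚ) (d : Fin n → Fin n → ℚ),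
        (∀ i, 0 ≤ c i) ∧ (∀ i j, 0 ≤ d i j) ∧
        (∀ i, c i ≠ 0 → 0 ≤ A (intVecToQ p (γ i))) ∧
        (∀ i j, d i j ≠ 0 → A (intVecToQ p (γ i)) = -1 ∧ A (intVecToQ p (γ j)) = 1) ∧
        intVecToQ p v =
          (∑ i, c i • intVecToQ p (γ i)) +
            ∑ i, ∑ j, d i j • (intVecToQ p (γ i) + intVecToQ p (γ j))) := by
  intro v
  set a : Fin n → ℚ := fun i => A (intVecToQ p (γ i)) with hadef
  have ha : ∀ i, a i = 1 ∨ a i = 0 ∨ a i = -1 := by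
    intro i
    simpa [Set.mem_insert_iff, hadef] using hA i
  constructor
  · rintro ⟨⟨c, hc, hv⟩, hAv⟩
    have hAsum : A (intVecToQ p v) = ∑ i, c i * a i := by
      rw [hv, map_sum]
      simp [hadef, map_smul, smul_eq_mul]
    set Sp : ℚ := ∑ i, (if a i = 1 then c i else 0) with hSpdef
    set Sm : ℚ := ∑ i, (if a i = -1 then c i else 0) with hSmdef
    have hSpnn : 0 ≤ Sp :=
      Finset.sum_nonneg fun i _ => by split_ifs with h; exacts [hc i, le_rfl]
    have hSmnn : 0 ≤ Sm :=
      Finset.sum_nonneg fun i _ => by split_ifs with h; exacts [hc i, le_rfl]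
    have hsplit : ∑ i, c i * a i = Sp - Sm := by
      rw [hSpdef, hSmdef, ← Finset.sum_sub_distrib]
      refine Finset.sum_congr rfl fun i _ => ?_
      rcases ha i with h | h | h <;> rw [h] <;> norm_num
    have hdiff : 0 ≤ Sp - Sm := by
      have := hAv
      rw [hAsum, hsplit] at this
      exact this
    by_cases hSp0 : Sp = 0
    · -- then Sm = 0, all negative coefficients vanish, use c itself
      have hSm0 : Sm = 0 := le_antisymm (by linarith) hSmnn
      have hneg : ∀ i, a i = -1 → c i = 0 := by
        intro i hi
        have h0 : ∀ j ∈ Finset.univ, (0:ℚ) ≤ (if a j = -1 then c j else 0) :=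
          fun j _ => by split_ifs with h; exacts [hc j, le_rfl]
        have h2 := (Finset.sum_eq_zero_iff_of_nonneg h0).mp
          (by rw [← hSmdef]; exact hSm0) i (Finset.mem_univ i)
        simpa [hi] using h2
      refine ⟨c, 0, hc, by simp, ?_, by simp, by simpa using hv⟩
      intro i hci
      rcases ha i with h | h | h
      · have h' : A (intVecToQ p (γ i)) = 1 := h
        rw [h']; norm_num
      · have h' : A (intVecToQ p (γ i)) = 0 := h
        rw [h']
      · exact absurd (hneg i h) hci
    · have hSpp : 0 < Sp := lt_of_le_of_ne hSpnn (Ne.symm hSp0)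
      set t : ℚ := Sm / Sp with htdef
      have ht0 : 0 ≤ t := div_nonneg hSmnn hSpnn
      have ht1 : t ≤ 1 := (div_le_one hSpp).mpr (by linarith)
      set c' : Fin n → ℚ :=
        fun i => if a i = -1 then 0 else if a i = 1 then c i * (1 - t) else c i with hc'def
      set d' : Fin n → Fin n → ℚ :=
        fun i j => if a i = -1 ∧ a j = 1 then c i * c j / Sp else 0 with hd'def
      have hrow : ∀ k, (∑ j, d' k j) = if a k = -1 then c k else 0 := by
        intro k
        by_cases hk : a k = -1
        · rw [if_pos hk]
          calc ∑ j, d' k j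
              = ∑ j, (c k / Sp) * (if a j = 1 then c j else 0) := by
                refine Finset.sum_congr rfl fun j _ => ?_
                rw [hd'def]
                by_cases hj : a j = 1 <;> simp [hk, hj] <;> ring
            _ = (c k / Sp) * Sp := by rw [← Finset.mul_sum, ← hSpdef]
            _ = c k := by field_simp
        · rw [if_neg hk]
          refine Finset.sum_eq_zero fun j _ => ?_
          rw [hd'def]
          simp [hk]
      have hcol : ∀ k, (∑ i, d' i k) = if a k = 1 then c k * t else 0 := by
        intro k
        by_cases hk : a k = 1
        · rw [if_pos hk]
          calc ∑ i, d' i k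
              = ∑ i, (c k / Sp) * (if a i = -1 then c i else 0) := by
                refine Finset.sum_congr rfl fun i _ => ?_
                rw [hd'def]
                by_cases hi : a i = -1 <;> simp [hk, hi] <;> ring
            _ = (c k / Sp) * Sm := by rw [← Finset.mul_sum, ← hSmdef]
            _ = c k * t := by rw [htdef]; field_simp
        · rw [if_neg hk]
          refine Finset.sum_eq_zero fun i _ => ?_
          rw [hd'def]
          simp [hk]
      refine ⟨c', d', ?_, ?_, ?_, ?_, ?_⟩
      · intro i
        rw [hc'def]
        dsimp only
        split_ifs
        exacts [le_rfl, mul_nonneg (hc i) (by linarith), hc i]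
      · intro i j
        rw [hd'def]
        dsimp only
        split_ifs
        exacts [div_nonneg (mul_nonneg (hc i) (hc j)) hSpnn, le_rfl]
      · intro i hci
        show 0 ≤ a i
        rcases ha i with h | h | h
        · rw [h]; norm_num
        · rw [h]
        · exfalso
          apply hci
          rw [hc'def]
          simp [h]
      · intro i j hij
        show a i = -1 ∧ a j = 1
        by_cases h : a i = -1 ∧ a j = 1
        · exact h
        · exfalso
          apply hij
          rw [hd'def]
          simp [h]
      · rw [sum_pair_smul, hv]
        refine Finset.sum_congr rfl fun k _ => ?_
        congr 1
        rw [hrow k, hcol k, hc'def]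
        rcases ha k with h | h | h <;> norm_num [h] <;> ring
  · rintro ⟨c, d, hc, hd, hcA, hdA, hv⟩
    constructor
    · refine ⟨fun k => c k + (∑ j, d k j) + (∑ i, d i k), ?_, ?_⟩
      · intro k
        have h1 : 0 ≤ ∑ j, d k j := Finset.sum_nonneg fun j _ => hd k j
        have h2 : 0 ≤ ∑ i, d i k := Finset.sum_nonneg fun i _ => hd i k
        have := hc k
        dsimp only
        linarith
      · rw [hv, sum_pair_smul]
    · rw [hv, map_add, map_sum]
      apply add_nonneg
      · refine Finset.sum_nonneg fun i _ => ?_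
        rw [map_smul, smul_eq_mul]
        by_cases h : c i = 0
        · simp [h]
        · exact mul_nonneg (hc i) (hcA i h)
      · rw [map_sum]
        refine Finset.sum_nonneg fun i _ => ?_
        rw [map_sum]
        refine Finset.sum_nonneg fun j _ => ?_
        rw [map_smul, smul_eq_mul, map_add]
        by_cases h : d i j = 0
        · simp [h]
        · obtain ⟨h1, h2⟩ := hdA i j h
          rw [h1, h2]
          norm_num
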